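/- Let R = ℂ[x,y,z]/(xy) and let Ω_{R/ℂ} be its module of Kähler differentials. (1) There is a well-defined R-linear map φ : Ω_{R/ℂ} → R ⊕ R determined by dx ↦ (x,0), dy ↦ (−y,0), dz ↦ (0,1). (2) The kernel of φ is exactly the R-submodule of Ω_{R/ℂ} generated by x·dy (the torsion submodule). (3) The sequence 0 → Ω_{R/ℂ}/ker(φ) → R ⊕ R → ℂ[z] → 0 is exact, where the induced injection comes from φ and the last map sends (f,g) to f(0,0,z); in particular the image of φ is the submodule (x,y)R ⊕ R of R ⊕ R. -/

import Mathlib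

set_option maxHeartbeats 1000000
set_option synthInstance.maxHeartbeats 400000


noncomputable section KaehlerToLog

open MvPolynomial KaehlerDifferential

/-- `R = ℂ[x,y,z]/(xy)`. -/
abbrev Rk : Type :=
  MvPolynomial (Fin 3) ℂ ⧸ Ideal.span {(X 0 * X 1 : MvPolynomial (Fin 3) ℂ)}

/-- The class of `x` in `R`. -/
def xk : Rk := Ideal.Quotient.mk _ (X 0)
/-- The class of `y` in `R`. -/
def yk : Rk := Ideal.Quotient.mk _ (X 1)
/-- The class of `z` in `R`. -/
def zk : Rk := Ideal.Quotient.mk _ (X 2)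

/-- Evaluation `R → ℂ[z]`, `[f] ↦ f(0,0,z)`. -/
def evz : Rk →ₐ[ℂ] Polynomial ℂ :=
  Ideal.Quotient.liftₐ _ (aeval ![0, 0, Polynomial.X]) (by
    intro a ha
    obtain ⟨c, rfl⟩ := Ideal.mem_span_singleton.mp ha
    simp)

/-- `ℂ[z]` as an `R`-algebra via `[f] ↦ f(0,0,z)`. -/
instance : Algebra Rk (Polynomial ℂ) := evz.toRingHom.toAlgebra

/-- The last map `R ⊕ R → ℂ[z]`, `(f,g) ↦ f(0,0,z)`. -/
def lastMap : Rk × Rk →ₗ[Rk] Polynomial ℂ :=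
  Algebra.linearMap Rk (Polynomial ℂ) ∘ₗ LinearMap.fst Rk Rk Rk

abbrev MvC := MvPolynomial (Fin 3) ℂ
abbrev Ik : Ideal MvC := Ideal.span {(X 0 * X 1 : MvC)}

def δ0 : Derivation ℂ MvC (Rk × Rk) :=
  mkDerivation ℂ ![(xk, 0), (-yk, 0), (0, 1)]

lemma xk_mul_yk : xk * yk = 0 := by
  rw [xk, yk, ← map_mul, Ideal.Quotient.eq_zero_iff_mem]
  exact Ideal.subset_span rfl

lemma algebraMap_mk : (algebraMap MvC Rk) = Ideal.Quotient.mk Ik :=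
  Ideal.Quotient.algebraMap_eq Ik

lemma δ0_X0 : δ0 (X 0) = (xk, 0) := by simp [δ0, mkDerivation_X]
lemma δ0_X1 : δ0 (X 1) = (-yk, 0) := by simp [δ0, mkDerivation_X]
lemma δ0_X2 : δ0 (X 2) = (0, 1) := by simp [δ0, mkDerivation_X]

lemma smul_mk (p : MvC) (m : Rk × Rk) : p • m = (Ideal.Quotient.mk Ik p) • m := by
  rw [algebra_compatible_smul Rk p m, algebraMap_mk]

lemma δ0_vanish : ∀ p ∈ Ik, δ0 p = 0 := by
  intro p hp
  obtain ⟨c, rfl⟩ := Ideal.mem_span_singleton'.mp hp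
  have hg : Ideal.Quotient.mk Ik (X 0 * X 1) = 0 := by
    rw [Ideal.Quotient.eq_zero_iff_mem]; exact Ideal.subset_span rfl
  have h1 : δ0 (X 0 * X 1) = 0 := by
    rw [Derivation.leibniz, δ0_X0, δ0_X1, smul_mk, smul_mk]
    have : (Ideal.Quotient.mk Ik (X 0)) = xk := rfl
    rw [this]
    have : (Ideal.Quotient.mk Ik (X 1)) = yk := rfl
    rw [this]
    ext
    · show xk * -yk + yk * xk = 0
      ring
    · show xk • (0:Rk) + yk • (0:Rk) = 0
      simp
  rw [Derivation.leibniz, h1, smul_zero, zero_add, smul_mk, hg]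
  exact zero_smul (MvC ⧸ Ik) (δ0 c)

def δfun : Rk → Rk × Rk := fun r =>
  Quotient.liftOn' r (fun p => δ0 p) (fun a b h => by
    have hab : a - b ∈ Ik := (Submodule.quotientRel_def _).mp h
    have h0 := δ0_vanish _ hab
    rw [map_sub, sub_eq_zero] at h0
    exact h0)

lemma δfun_mk (p : MvC) : δfun (Ideal.Quotient.mk Ik p) = δ0 p := rfl

lemma mk_C (c : ℂ) : Ideal.Quotient.mk Ik (C c) = algebraMap ℂ Rk c := by
  rw [IsScalarTower.algebraMap_apply ℂ MvC Rk, algebraMap_mk, MvPolynomial.algebraMap_eq]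

def δ : Derivation ℂ Rk (Rk × Rk) where
  toFun := δfun
  map_add' x y := by
    obtain ⟨a, rfl⟩ := Ideal.Quotient.mk_surjective x
    obtain ⟨b, rfl⟩ := Ideal.Quotient.mk_surjective y
    rw [← map_add, δfun_mk, δfun_mk, δfun_mk, map_add]
  map_smul' c x := by
    obtain ⟨a, rfl⟩ := Ideal.Quotient.mk_surjective x
    have h1 : c • (Ideal.Quotient.mk Ik a) = Ideal.Quotient.mk Ik (c • a) := by
      exact ((Ideal.Quotient.mkₐ ℂ Ik).toLinearMap.map_smul c a).symm
    show δfun (c • Ideal.Quotient.mk Ik a) = c • δfun (Ideal.Quotient.mk Ik a)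
    rw [h1, δfun_mk, δfun_mk, Derivation.map_smul]
  map_one_eq_zero' := by
    have : (1 : Rk) = Ideal.Quotient.mk Ik 1 := rfl
    show δfun 1 = 0
    rw [this, δfun_mk]
    exact δ0.map_one_eq_zero
  leibniz' x y := by
    obtain ⟨a, rfl⟩ := Ideal.Quotient.mk_surjective x
    obtain ⟨b, rfl⟩ := Ideal.Quotient.mk_surjective y
    show δfun (Ideal.Quotient.mk Ik a * Ideal.Quotient.mk Ik b) =
      Ideal.Quotient.mk Ik a • δfun (Ideal.Quotient.mk Ik b) +
        Ideal.Quotient.mk Ik b • δfun (Ideal.Quotient.mk Ik a)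
    rw [← map_mul, δfun_mk, Derivation.leibniz, smul_mk a, smul_mk b]
    rfl

lemma δ_mk (p : MvC) : δ (Ideal.Quotient.mk Ik p) = δ0 p := rfl
lemma δ_xk : δ xk = (xk, 0) := by
  rw [xk, δ_mk, δ0_X0]; rfl
lemma δ_yk : δ yk = (-yk, 0) := by
  rw [yk, δ_mk, δ0_X1]; rfl
lemma δ_zk : δ zk = (0, 1) := by
  rw [zk, δ_mk, δ0_X2]

def φ0 : Ω[Rk⁄ℂ] →ₗ[Rk] Rk × Rk := δ.liftKaehlerDifferential

lemma φ0_D (r : Rk) : φ0 (KaehlerDifferential.D ℂ Rk r) = δ r :=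
  δ.liftKaehlerDifferential_comp_D r

lemma adjoin_top : Algebra.adjoin ℂ {xk, yk, zk} = ⊤ := by
  rw [eq_top_iff]
  rintro r -
  obtain ⟨p, rfl⟩ := Ideal.Quotient.mk_surjective r
  induction p using MvPolynomial.induction_on with
  | C c => rw [mk_C]; exact Subalgebra.algebraMap_mem _ c
  | add p q hp hq => rw [map_add]; exact add_mem hp hq
  | mul_X p i hp =>
      rw [map_mul]
      refine mul_mem hp (Algebra.subset_adjoin ?_)
      fin_cases i
      · exact Or.inl rfl
      · exact Or.inr (Or.inl rfl)
      · exact Or.inr (Or.inr rfl)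

lemma phi_unique (ψ : Ω[Rk⁄ℂ] →ₗ[Rk] Rk × Rk)
    (h1 : ψ (KaehlerDifferential.D ℂ Rk xk) = (xk, 0))
    (h2 : ψ (KaehlerDifferential.D ℂ Rk yk) = (-yk, 0))
    (h3 : ψ (KaehlerDifferential.D ℂ Rk zk) = (0, 1)) : ψ = φ0 := by
  apply Derivation.liftKaehlerDifferential_unique
  apply Derivation.ext_of_adjoin_eq_top _ adjoin_top
  rintro r (rfl | rfl | rfl)
  · show ψ (KaehlerDifferential.D ℂ Rk xk) = φ0 (KaehlerDifferential.D ℂ Rk xk)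
    rw [h1, φ0_D, δ_xk]
  · show ψ (KaehlerDifferential.D ℂ Rk yk) = φ0 (KaehlerDifferential.D ℂ Rk yk)
    rw [h2, φ0_D, δ_yk]
  · show ψ (KaehlerDifferential.D ℂ Rk zk) = φ0 (KaehlerDifferential.D ℂ Rk zk)
    rw [h3, φ0_D, δ_zk]

abbrev dSet : Set (Ω[Rk⁄ℂ]) :=
  {KaehlerDifferential.D ℂ Rk xk, KaehlerDifferential.D ℂ Rk yk, KaehlerDifferential.D ℂ Rk zk}

lemma span_dxyz : Submodule.span Rk dSet = ⊤ := by
  rw [eq_top_iff, ← KaehlerDifferential.span_range_derivation, Submodule.span_le]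
  rintro - ⟨r, rfl⟩
  obtain ⟨p, rfl⟩ := Ideal.Quotient.mk_surjective r
  induction p using MvPolynomial.induction_on with
  | C c =>
      rw [mk_C, Derivation.map_algebraMap]
      exact Submodule.zero_mem _
  | add p q hp hq => rw [map_add, map_add]; exact add_mem hp hq
  | mul_X p i hp =>
      rw [map_mul, Derivation.leibniz]
      refine add_mem (Submodule.smul_mem _ _ ?_) (Submodule.smul_mem _ _ hp)
      refine Submodule.subset_span ?_
      fin_cases i
      · exact Or.inl rfl
      · exact Or.inr (Or.inl rfl)
      · exact Or.inr (Or.inr rfl)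

lemma omega_repr (ω : Ω[Rk⁄ℂ]) : ∃ a b c : Rk,
    ω = a • KaehlerDifferential.D ℂ Rk xk + b • KaehlerDifferential.D ℂ Rk yk +
      c • KaehlerDifferential.D ℂ Rk zk := by
  have h : ω ∈ Submodule.span Rk dSet := by rw [span_dxyz]; trivial
  rw [show dSet = insert (KaehlerDifferential.D ℂ Rk xk)
    {KaehlerDifferential.D ℂ Rk yk, KaehlerDifferential.D ℂ Rk zk} from rfl,
    Submodule.mem_span_insert] at h
  obtain ⟨a, w, hw, rfl⟩ := h
  rw [Submodule.mem_span_insert] at hw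
  obtain ⟨b, w', hw', rfl⟩ := hw
  rw [Submodule.mem_span_singleton] at hw'
  obtain ⟨c, rfl⟩ := hw'
  exact ⟨a, b, c, by abel⟩

lemma relation : yk • KaehlerDifferential.D ℂ Rk xk = -(xk • KaehlerDifferential.D ℂ Rk yk) := by
  have h := (KaehlerDifferential.D ℂ Rk).leibniz xk yk
  rw [xk_mul_yk, map_zero] at h
  linear_combination (norm := abel) -h

lemma X1_not_dvd_X0 : ¬ (X 1 : MvC) ∣ X 0 := by
  rintro ⟨q, hq⟩
  have := congrArg (eval (fun i => if i = 0 then (1:ℂ) else 0)) hq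
  simp at this

lemma X0_not_dvd_X1 : ¬ (X 0 : MvC) ∣ X 1 := by
  rintro ⟨q, hq⟩
  have := congrArg (eval (fun i => if i = 1 then (1:ℂ) else 0)) hq
  simp at this

lemma eps_sub_mem (i : Fin 3) (F : MvC) :
    F - aeval (Function.update (X : Fin 3 → MvC) i 0) F ∈ Ideal.span {(X i : MvC)} := by
  induction F using MvPolynomial.induction_on with
  | C c => simp
  | add p q hp hq =>
      rw [map_add]
      have h := add_mem hp hq
      have e : p - aeval (Function.update (X : Fin 3 → MvC) i 0) p + (q - aeval (Function.update (X : Fin 3 → MvC) i 0) q)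
          = p + q - (aeval (Function.update (X : Fin 3 → MvC) i 0) p + aeval (Function.update (X : Fin 3 → MvC) i 0) q) := by
        ring
      rwa [e] at h
  | mul_X p j hp =>
      rw [map_mul, aeval_X]
      by_cases hij : j = i
      · subst hij
        rw [Function.update_self, mul_zero, sub_zero]
        exact Ideal.mul_mem_left _ p (Ideal.subset_span rfl)
      · rw [Function.update_of_ne hij]
        have e : p * X j - aeval (Function.update (X : Fin 3 → MvC) i 0) p * X j
            = (p - aeval (Function.update (X : Fin 3 → MvC) i 0) p) * X j := by ring
        rw [e]
        exact Ideal.mul_mem_right _ _ hp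

lemma X_dvd_of_eps_zero (i : Fin 3) (F : MvC) (h : aeval (Function.update (X : Fin 3 → MvC) i 0) F = 0) :
    (X i : MvC) ∣ F := by
  have := eps_sub_mem i F
  rw [h, sub_zero] at this
  exact Ideal.mem_span_singleton.mp this

lemma key_dvd (A B : MvC) (h : A * X 0 - B * X 1 ∈ Ik) :
    (∃ A₁, A = X 1 * A₁) ∧ (∃ B₁, B = X 0 * B₁) := by
  obtain ⟨P, hP⟩ := Ideal.mem_span_singleton'.mp h
  constructor
  · have h0 : aeval (Function.update (X : Fin 3 → MvC) 1 0) (A * X 0 - B * X 1) =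
        aeval (Function.update (X : Fin 3 → MvC) 1 0) (P * (X 0 * X 1)) := by rw [hP]
    rw [map_sub, map_mul, map_mul, map_mul, map_mul, aeval_X, aeval_X,
      Function.update_self, Function.update_of_ne (by decide : (0 : Fin 3) ≠ 1)] at h0
    simp only [aeval_X, mul_zero, sub_zero] at h0
    have hA : aeval (Function.update (X : Fin 3 → MvC) 1 0) A = 0 :=
      mul_right_cancel₀ (MvPolynomial.X_ne_zero 0) (by rw [h0, zero_mul])
    obtain ⟨q, hq⟩ := X_dvd_of_eps_zero 1 A hA
    exact ⟨q, hq⟩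
  · have h0 : aeval (Function.update (X : Fin 3 → MvC) 0 0) (A * X 0 - B * X 1) =
        aeval (Function.update (X : Fin 3 → MvC) 0 0) (P * (X 0 * X 1)) := by rw [hP]
    rw [map_sub, map_mul, map_mul, map_mul, map_mul, aeval_X, aeval_X,
      Function.update_self, Function.update_of_ne (by decide : (1 : Fin 3) ≠ 0)] at h0
    simp only [aeval_X, mul_zero, zero_mul, zero_sub, neg_eq_zero] at h0
    have hB : aeval (Function.update (X : Fin 3 → MvC) 0 0) B = 0 :=
      mul_right_cancel₀ (MvPolynomial.X_ne_zero 1) (by rw [h0]; ring)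
    obtain ⟨q, hq⟩ := X_dvd_of_eps_zero 0 B hB
    exact ⟨q, hq⟩

lemma mk_X0 : Ideal.Quotient.mk Ik (X 0) = xk := rfl
lemma mk_X1 : Ideal.Quotient.mk Ik (X 1) = yk := rfl

lemma phi_apply (ψ : Ω[Rk⁄ℂ] →ₗ[Rk] Rk × Rk)
    (h1 : ψ (KaehlerDifferential.D ℂ Rk xk) = (xk, 0))
    (h2 : ψ (KaehlerDifferential.D ℂ Rk yk) = (-yk, 0))
    (h3 : ψ (KaehlerDifferential.D ℂ Rk zk) = (0, 1)) (a b c : Rk) :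
    ψ (a • KaehlerDifferential.D ℂ Rk xk + b • KaehlerDifferential.D ℂ Rk yk +
      c • KaehlerDifferential.D ℂ Rk zk) = (a * xk - b * yk, c) := by
  rw [map_add, map_add, map_smul, map_smul, map_smul, h1, h2, h3]
  simp only [Prod.smul_mk, Prod.mk_add_mk, smul_eq_mul, Prod.mk.injEq]
  constructor <;> ring

lemma ker_phi (ψ : Ω[Rk⁄ℂ] →ₗ[Rk] Rk × Rk)
    (h1 : ψ (KaehlerDifferential.D ℂ Rk xk) = (xk, 0))
    (h2 : ψ (KaehlerDifferential.D ℂ Rk yk) = (-yk, 0))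
    (h3 : ψ (KaehlerDifferential.D ℂ Rk zk) = (0, 1)) :
    LinearMap.ker ψ = Submodule.span Rk {xk • KaehlerDifferential.D ℂ Rk yk} := by
  apply le_antisymm
  · intro ω hω
    obtain ⟨a, b, c, rfl⟩ := omega_repr ω
    rw [LinearMap.mem_ker, phi_apply ψ h1 h2 h3, Prod.mk_eq_zero] at hω
    obtain ⟨hfst, rfl⟩ := hω
    obtain ⟨A, rfl⟩ := Ideal.Quotient.mk_surjective a
    obtain ⟨B, rfl⟩ := Ideal.Quotient.mk_surjective b
    have hmem : A * X 0 - B * X 1 ∈ Ik := by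
      rw [← Ideal.Quotient.eq_zero_iff_mem, map_sub, map_mul, map_mul, mk_X0, mk_X1]
      exact hfst
    obtain ⟨⟨A₁, rfl⟩, ⟨B₁, rfl⟩⟩ := key_dvd A B hmem
    refine Submodule.mem_span_singleton.mpr
      ⟨Ideal.Quotient.mk Ik B₁ - Ideal.Quotient.mk Ik A₁, ?_⟩
    have e1 : (Ideal.Quotient.mk Ik (X 1 * A₁)) • KaehlerDifferential.D ℂ Rk xk
        = Ideal.Quotient.mk Ik A₁ • (yk • KaehlerDifferential.D ℂ Rk xk) := by
      rw [map_mul, mk_X1]; refine Eq.trans ?_ (smul_smul (Ideal.Quotient.mk Ik A₁) yk (KaehlerDifferential.D ℂ Rk xk)).symm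
      congr 1
      ring
    have e2 : (Ideal.Quotient.mk Ik (X 0 * B₁)) • KaehlerDifferential.D ℂ Rk yk
        = Ideal.Quotient.mk Ik B₁ • (xk • KaehlerDifferential.D ℂ Rk yk) := by
      rw [map_mul, mk_X0]; refine Eq.trans ?_ (smul_smul (Ideal.Quotient.mk Ik B₁) xk (KaehlerDifferential.D ℂ Rk yk)).symm
      congr 1
      ring
    rw [e1, e2, relation]
    have z0 : (0:Rk) • KaehlerDifferential.D ℂ Rk zk = 0 := zero_smul Rk (KaehlerDifferential.D ℂ Rk zk)
    have n0 : Ideal.Quotient.mk Ik A₁ • -(xk • KaehlerDifferential.D ℂ Rk yk)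
        = -(Ideal.Quotient.mk Ik A₁ • (xk • KaehlerDifferential.D ℂ Rk yk)) := smul_neg (Ideal.Quotient.mk Ik A₁ : Rk) (xk • KaehlerDifferential.D ℂ Rk yk)
    have s0 : (Ideal.Quotient.mk Ik B₁ - Ideal.Quotient.mk Ik A₁) • (xk • KaehlerDifferential.D ℂ Rk yk)
        = Ideal.Quotient.mk Ik B₁ • (xk • KaehlerDifferential.D ℂ Rk yk)
          - Ideal.Quotient.mk Ik A₁ • (xk • KaehlerDifferential.D ℂ Rk yk) := sub_smul (Ideal.Quotient.mk Ik B₁ : Rk) (Ideal.Quotient.mk Ik A₁) (xk • KaehlerDifferential.D ℂ Rk yk)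
    rw [z0, add_zero, n0, s0]
    abel
  · rw [Submodule.span_le, Set.singleton_subset_iff]
    rw [SetLike.mem_coe, LinearMap.mem_ker, map_smul, h2]
    refine Prod.ext ?_ ?_
    · show xk • (-yk) = 0
      rw [smul_eq_mul]
      linear_combination -xk_mul_yk
    · show xk • (0 : Rk) = 0
      rw [smul_zero]

lemma range_phi (ψ : Ω[Rk⁄ℂ] →ₗ[Rk] Rk × Rk)
    (h1 : ψ (KaehlerDifferential.D ℂ Rk xk) = (xk, 0))
    (h2 : ψ (KaehlerDifferential.D ℂ Rk yk) = (-yk, 0))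
    (h3 : ψ (KaehlerDifferential.D ℂ Rk zk) = (0, 1)) :
    LinearMap.range ψ =
      Submodule.prod (Ideal.span {xk, yk} : Submodule Rk Rk) (⊤ : Submodule Rk Rk) := by
  rw [LinearMap.range_eq_map, ← span_dxyz, Submodule.map_span]
  have himg : ψ '' dSet = {(xk, 0), (-yk, 0), ((0 : Rk), (1 : Rk))} := by
    rw [show dSet = insert (KaehlerDifferential.D ℂ Rk xk)
      {KaehlerDifferential.D ℂ Rk yk, KaehlerDifferential.D ℂ Rk zk} from rfl,
      Set.image_insert_eq, Set.image_insert_eq, Set.image_singleton, h1, h2, h3]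
  rw [himg]
  apply le_antisymm
  · rw [Submodule.span_le]
    rintro p (rfl | rfl | rfl)
    · exact ⟨Ideal.subset_span (Or.inl rfl), trivial⟩
    · exact ⟨neg_mem (Ideal.subset_span (Or.inr rfl)), trivial⟩
    · exact ⟨Ideal.zero_mem _, trivial⟩
  · rintro ⟨f, g⟩ ⟨hf, -⟩
    simp only at hf
    obtain ⟨a, b, hab⟩ := Ideal.mem_span_pair.mp hf
    have : (f, g) = a • ((xk, 0) : Rk × Rk) + (-b) • ((-yk, 0) : Rk × Rk)
        + g • ((0, 1) : Rk × Rk) := by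
      simp only [Prod.smul_mk, Prod.mk_add_mk, smul_eq_mul, Prod.mk.injEq]
      constructor
      · linear_combination -hab
      · ring
    rw [this]
    refine add_mem (add_mem ?_ ?_) ?_ <;>
      exact Submodule.smul_mem _ _ (Submodule.subset_span (by simp))

lemma evz_mk (p : MvC) : evz (Ideal.Quotient.mk Ik p) = aeval ![0, 0, Polynomial.X] p := by
  rw [evz, Ideal.Quotient.liftₐ_apply]
  rfl

lemma evz_zk : evz zk = Polynomial.X := by
  rw [zk, evz_mk, aeval_X]
  rfl

def w : Fin 3 → MvC := fun j => if j = 2 then X 2 else 0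

lemma eta_sub_mem (F : MvC) :
    F - aeval w F ∈ Ideal.span {(X 0 : MvC), X 1} := by
  induction F using MvPolynomial.induction_on with
  | C c => simp
  | add p q hp hq =>
      rw [map_add]
      have h := add_mem hp hq
      have e : p - aeval w p + (q - aeval w q) = p + q - (aeval w p + aeval w q) := by ring
      rwa [e] at h
  | mul_X p i hp =>
      rw [map_mul, aeval_X]
      by_cases hi : i = 2
      · subst hi
        rw [show w 2 = X 2 from rfl]
        have e : p * X 2 - aeval w p * X 2 = (p - aeval w p) * X 2 := by ring
        rw [e]
        exact Ideal.mul_mem_right _ _ hp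
      · rw [show w i = 0 from if_neg hi, mul_zero, sub_zero]
        refine Ideal.mul_mem_left _ p (Ideal.subset_span ?_)
        fin_cases i
        · exact Or.inl rfl
        · exact Or.inr rfl
        · exact absurd rfl hi

lemma comp_w : (Polynomial.aeval (R := ℂ) (X 2 : MvC)).comp (aeval ![0, 0, Polynomial.X]) = aeval w := by
  apply MvPolynomial.algHom_ext
  intro i
  fin_cases i <;> simp [w]

lemma evz_surj : Function.Surjective evz := by
  intro p
  refine ⟨Polynomial.aeval zk p, ?_⟩
  have h : evz.comp (Polynomial.aeval zk) = AlgHom.id ℂ (Polynomial ℂ) := by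
    apply Polynomial.algHom_ext
    rw [AlgHom.comp_apply, Polynomial.aeval_X, evz_zk, AlgHom.id_apply]
  calc evz (Polynomial.aeval zk p) = (evz.comp (Polynomial.aeval zk)) p := rfl
    _ = p := by rw [h]; rfl

lemma mem_span_xy_of_evz_zero (f : Rk) (h : evz f = 0) : f ∈ Ideal.span {xk, yk} := by
  obtain ⟨F, rfl⟩ := Ideal.Quotient.mk_surjective f
  rw [evz_mk] at h
  have heta : aeval w F = 0 := by
    have := congrArg (Polynomial.aeval (R := ℂ) (X 2 : MvC)) h
    rw [map_zero] at this
    rw [← comp_w]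
    exact this
  have hm := eta_sub_mem F
  rw [heta, sub_zero] at hm
  obtain ⟨a, b, hab⟩ := Ideal.mem_span_pair.mp hm
  rw [← hab, map_add, map_mul, map_mul, mk_X0, mk_X1]
  exact add_mem (Ideal.mul_mem_left _ _ (Ideal.subset_span (Or.inl rfl)))
    (Ideal.mul_mem_left _ _ (Ideal.subset_span (Or.inr rfl)))

lemma evz_of_mem_span (f : Rk) (h : f ∈ Ideal.span {xk, yk}) : evz f = 0 := by
  obtain ⟨a, b, hab⟩ := Ideal.mem_span_pair.mp h
  have hx : evz xk = 0 := by rw [xk, evz_mk, aeval_X]; rfl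
  have hy : evz yk = 0 := by rw [yk, evz_mk, aeval_X]; rfl
  rw [← hab, map_add, map_mul, map_mul, hx, hy, mul_zero, mul_zero, add_zero]


lemma lastMap_apply (f g : Rk) : lastMap (f, g) = evz f := rfl

lemma ker_lastMap : LinearMap.ker lastMap =
    Submodule.prod (Ideal.span {xk, yk} : Submodule Rk Rk) (⊤ : Submodule Rk Rk) := by
  ext p
  obtain ⟨f, g⟩ := p
  simp only [LinearMap.mem_ker, Submodule.mem_prod, Submodule.mem_top, and_true]
  rw [lastMap_apply]
  constructor
  · exact mem_span_xy_of_evz_zero f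
  · exact evz_of_mem_span f

lemma lastMap_surj : Function.Surjective lastMap := by
  intro p
  obtain ⟨f, hf⟩ := evz_surj p
  exact ⟨(f, 0), hf⟩

/-- Let `R = ℂ[x,y,z]/(xy)` and `Ω_{R/ℂ}` its module of Kähler differentials.
(1) There is a unique (well-defined) `R`-linear map `φ : Ω_{R/ℂ} → R ⊕ R` with
`dx ↦ (x,0)`, `dy ↦ (−y,0)`, `dz ↦ (0,1)`.
(2) The kernel of `φ` is exactly the `R`-submodule generated by `x·dy` (the torsion
submodule).
(3) The sequence `0 → Ω_{R/ℂ}/ker(φ) → R ⊕ R → ℂ[z] → 0` is exact, where the injection is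
induced by `φ` and the last map sends `(f,g)` to `f(0,0,z)`; in particular the image of `φ`
is the submodule `(x,y)R ⊕ R` of `R ⊕ R`. -/
theorem kaehler_to_log_sequence :
    (∃! φ : Ω[Rk⁄ℂ] →ₗ[Rk] Rk × Rk,
      φ (D ℂ Rk xk) = (xk, 0) ∧ φ (D ℂ Rk yk) = (-yk, 0) ∧ φ (D ℂ Rk zk) = (0, 1)) ∧
    (∀ φ : Ω[Rk⁄ℂ] →ₗ[Rk] Rk × Rk,
      φ (D ℂ Rk xk) = (xk, 0) → φ (D ℂ Rk yk) = (-yk, 0) → φ (D ℂ Rk zk) = (0, 1) →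
      LinearMap.ker φ = Submodule.span Rk {xk • D ℂ Rk yk} ∧
      Function.Injective ((LinearMap.ker φ).liftQ φ le_rfl) ∧
      LinearMap.range ((LinearMap.ker φ).liftQ φ le_rfl) = LinearMap.ker lastMap ∧
      Function.Surjective lastMap ∧
      LinearMap.range φ = Submodule.prod (Ideal.span {xk, yk} : Submodule Rk Rk) (⊤ : Submodule Rk Rk)) := by
  constructor
  · refine ⟨φ0, ⟨by rw [φ0_D, δ_xk], by rw [φ0_D, δ_yk], by rw [φ0_D, δ_zk]⟩, ?_⟩
    rintro ψ ⟨h1, h2, h3⟩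
    exact phi_unique ψ h1 h2 h3
  · intro ψ h1 h2 h3
    refine ⟨ker_phi ψ h1 h2 h3, ?_, ?_, lastMap_surj, range_phi ψ h1 h2 h3⟩
    · rw [← LinearMap.ker_eq_bot]
      exact Submodule.ker_liftQ_eq_bot _ _ _ le_rfl
    · rw [Submodule.range_liftQ, range_phi ψ h1 h2 h3, ker_lastMap]

end KaehlerToLog
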